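/- For a non-negative continuous random variable X with cdf F and survival function F̄, the weighted cumulative residual entropy satisfies ξ^w(X) = −(1/2) ∫₀^∞ x² (1 + log F̄(x)) dF(x). -/

import Mathlib

/-!
Writing `t² = ∫₀ᵗ 2x dx` and applying Fubini turns the right-hand side into
`-∫₀^∞ x (∫_{t > x} (1 + log F̄(t)) dF(t)) dx`. Since `X` has no atoms, `F̄(X)` is uniformly
distributed on `(0, 1)`, and more precisely `F̄(X)` restricted to `{X > x}` is Lebesgue measure
on `(0, F̄(x))`. Hence the inner integral is `∫₀^{F̄(x)} (1 + log u) du = F̄(x) log F̄(x)`.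
-/

open MeasureTheory Set Real Filter Topology

namespace ProbabilityTheory

variable {μ : Measure ℝ}

lemma continuous_cdf [IsProbabilityMeasure μ] [NullSingletonClass μ] : Continuous (cdf μ) := by
  refine continuous_iff_continuousAt.2 fun x => continuousAt_iff_continuous_left_right.2
    ⟨continuousWithinAt_Iio_iff_Iic.1 ?_, (cdf μ).right_continuous x⟩
  have hjump : (cdf μ).measure {x} = 0 := by rw [measure_cdf, measure_singleton]
  rw [StieltjesFunction.measure_singleton, ENNReal.ofReal_eq_zero, sub_nonpos] at hjump
  exact (monotone_cdf μ).continuousWithinAt_Iio_iff_leftLim_eq.2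
    (le_antisymm ((monotone_cdf μ).leftLim_le le_rfl) hjump)

def survival (μ : Measure ℝ) (t : ℝ) : ℝ := μ.real (Ioi t)

lemma survival_eq_one_sub_cdf [IsProbabilityMeasure μ] :
    survival μ = fun t => 1 - cdf μ t := by
  ext t
  rw [survival, cdf_eq_real, ← compl_Iic, probReal_compl_eq_one_sub measurableSet_Iic]

lemma antitone_survival [IsFiniteMeasure μ] : Antitone (survival μ) := fun _ _ hst =>
  measureReal_mono (Ioi_subset_Ioi hst)

lemma measurable_survival [IsFiniteMeasure μ] : Measurable (survival μ) :=
  antitone_survival.measurable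

lemma survival_nonneg (t : ℝ) : 0 ≤ survival μ t := measureReal_nonneg

lemma survival_le_one [IsProbabilityMeasure μ] (t : ℝ) : survival μ t ≤ 1 := measureReal_le_one

lemma continuous_survival [IsProbabilityMeasure μ] [NullSingletonClass μ] :
    Continuous (survival μ) := by
  rw [survival_eq_one_sub_cdf]
  exact continuous_const.sub continuous_cdf

lemma tendsto_survival_atTop [IsProbabilityMeasure μ] :
    Tendsto (survival μ) atTop (𝓝 0) := by
  simpa only [survival_eq_one_sub_cdf, sub_self] using (tendsto_cdf_atTop μ).const_sub 1

lemma tendsto_survival_atBot [IsProbabilityMeasure μ] :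
    Tendsto (survival μ) atBot (𝓝 1) := by
  simpa only [survival_eq_one_sub_cdf, sub_zero] using (tendsto_cdf_atBot μ).const_sub 1

variable [IsProbabilityMeasure μ] [NullSingletonClass μ]

/- `{t | v ≤ F̄ t}` is a closed lower set, hence of the form `Iic a`; by continuity `F̄ = v` on its
frontier `{a}`, so `{t | F̄ t < v} = Ioi a` has measure `F̄ a = v`. -/
lemma measure_survival_lt {v : ℝ} (hv₀ : 0 < v) (hv₁ : v ≤ 1) :
    μ {t | survival μ t < v} = ENNReal.ofReal v := by
  set S := {t | v ≤ survival μ t}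
  have hcompl : {t | survival μ t < v} = Sᶜ := by ext; simp [S]
  have hbdd : BddAbove S := by
    obtain ⟨t₀, ht₀⟩ :=
      eventually_atTop.1 ((tendsto_survival_atTop (μ := μ)).eventually_lt_const hv₀)
    exact ⟨t₀, fun t ht => not_lt.1 fun h => (ht₀ t h.le).not_ge ht⟩
  rcases S.eq_empty_or_nonempty with hS | hS
  · have hv : v = 1 := le_antisymm hv₁ <| le_of_tendsto tendsto_survival_atBot <|
      Eventually.of_forall fun t => le_of_lt <| not_le.1 fun h => hS.subset h
    rw [hcompl, hS, compl_empty, measure_univ, hv, ENNReal.ofReal_one]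
  · have hclosed : IsClosed S := isClosed_le continuous_const continuous_survival
    have hIic : S = Iic (sSup S) := Subset.antisymm (fun t ht => le_csSup hbdd ht)
      fun t ht => (hclosed.csSup_mem hS hbdd).trans (antitone_survival ht)
    have hlevel : survival μ (sSup S) = v := by
      have hfrontier := (continuous_survival (μ := μ)).frontier_preimage_subset (Ici v)
      rw [frontier_Ici] at hfrontier
      refine hfrontier ?_
      rw [show survival μ ⁻¹' Ici v = Iic (sSup S) from hIic, frontier_Iic]
      rfl
    rw [hcompl, hIic, compl_Iic, ← hlevel, survival, ofReal_measureReal]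

lemma measure_survival_lt_inter_Ioi (x v : ℝ) :
    μ ({t | survival μ t < v} ∩ Ioi x) = ENNReal.ofReal (min v (survival μ x)) := by
  rcases le_or_gt v 0 with hv₀ | hv₀
  · have hempty : {t | survival μ t < v} = ∅ :=
      eq_empty_of_forall_notMem fun t ht => (hv₀.trans (survival_nonneg t)).not_gt ht
    rw [hempty, empty_inter, measure_empty, ENNReal.ofReal_of_nonpos (min_le_of_left_le hv₀)]
  rcases le_or_gt v (survival μ x) with hvx | hvx
  · have hsub : {t | survival μ t < v} ⊆ Ioi x := fun t ht =>
      not_le.1 fun htx => (hvx.trans (antitone_survival htx)).not_gt ht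
    rw [inter_eq_left.2 hsub, min_eq_left hvx,
      measure_survival_lt hv₀ (hvx.trans (survival_le_one x))]
  · have hsub : Ioi x ⊆ {t | survival μ t < v} := fun t ht =>
      (antitone_survival (le_of_lt ht)).trans_lt hvx
    rw [inter_eq_right.2 hsub, min_eq_right hvx.le, survival, ofReal_measureReal]

lemma map_survival_restrict_Ioi (x : ℝ) :
    (μ.restrict (Ioi x)).map (survival μ) = volume.restrict (Ioo 0 (survival μ x)) := by
  have hIio : ∀ v, (μ.restrict (Ioi x)).map (survival μ) (Iio v)
      = volume.restrict (Ioo 0 (survival μ x)) (Iio v) := fun v => by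
    rw [Measure.map_apply measurable_survival measurableSet_Iio,
      Measure.restrict_apply (measurable_survival measurableSet_Iio),
      Measure.restrict_apply measurableSet_Iio, Iio_inter_Ioo, Real.volume_Ioo, sub_zero]
    exact measure_survival_lt_inter_Ioi x v
  have huniv : (μ.restrict (Ioi x)).map (survival μ) univ
      = volume.restrict (Ioo 0 (survival μ x)) univ := by
    rw [Measure.map_apply measurable_survival MeasurableSet.univ, Measure.restrict_apply_univ,
      preimage_univ, Measure.restrict_apply_univ, Real.volume_Ioo, sub_zero, survival,
      ofReal_measureReal]
  refine Measure.ext_of_Ici _ _ fun v => ?_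
  rw [← compl_Iio, measure_compl measurableSet_Iio (measure_ne_top _ _),
    measure_compl measurableSet_Iio (measure_ne_top _ _), huniv, hIio]

lemma setIntegral_Ioi_comp_survival (x : ℝ) {f : ℝ → ℝ}
    (hf : AEStronglyMeasurable f (volume.restrict (Ioo 0 (survival μ x)))) :
    ∫ t in Ioi x, f (survival μ t) ∂μ = ∫ u in Ioo 0 (survival μ x), f u := by
  rw [← map_survival_restrict_Ioi x] at hf ⊢
  exact (integral_map measurable_survival.aemeasurable hf).symm

lemma setIntegral_Ioi_one_add_log_survival (x : ℝ) :
    ∫ t in Ioi x, (1 + log (survival μ t)) ∂μ = survival μ x * log (survival μ x) := by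
  rw [setIntegral_Ioi_comp_survival x (f := fun u => 1 + log u) (by fun_prop),
    ← integral_Ioc_eq_integral_Ioo, ← intervalIntegral.integral_of_le (survival_nonneg x),
    intervalIntegral.integral_add intervalIntegrable_const
      intervalIntegral.intervalIntegrable_log', integral_log]
  simp

end ProbabilityTheory

lemma integral_indicator_Ioo_two_mul {t : ℝ} (ht : 0 ≤ t) :
    ∫ x, (Ioo 0 t).indicator (fun x => 2 * x) x = t ^ 2 := by
  rw [integral_indicator measurableSet_Ioo, ← integral_Ioc_eq_integral_Ioo,
    ← intervalIntegral.integral_of_le ht, intervalIntegral.integral_const_mul, integral_id]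
  ring

lemma integrable_indicator_Ioo_two_mul (t : ℝ) :
    Integrable ((Ioo 0 t).indicator fun x : ℝ => 2 * x) :=
  (((continuous_const.mul continuous_id).integrableOn_Icc (μ := volume)).mono_set
    Ioo_subset_Icc_self).integrable_indicator measurableSet_Ioo

lemma measurable_indicator_Ioo_two_mul :
    Measurable fun p : ℝ × ℝ => (Ioo 0 p.1).indicator (fun x => 2 * x) p.2 := by
  have hset : MeasurableSet {p : ℝ × ℝ | p.2 ∈ Ioo 0 p.1} :=
    (measurableSet_lt measurable_const measurable_snd).inter
      (measurableSet_lt measurable_snd measurable_fst)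
  exact (measurable_const.mul measurable_snd).indicator hset

lemma integral_sq_mul_eq_setIntegral_Ioi {μ : Measure ℝ} [SFinite μ] {φ : ℝ → ℝ}
    (h₀ : ∀ᵐ t ∂μ, 0 ≤ t) (hφ : AEStronglyMeasurable φ μ)
    (hint : Integrable (fun t => t ^ 2 * φ t) μ) :
    ∫ t, t ^ 2 * φ t ∂μ = ∫ x in Ioi 0, 2 * x * ∫ t in Ioi x, φ t ∂μ := by
  set k : ℝ → ℝ → ℝ := fun t x => (Ioo 0 t).indicator (fun x => 2 * x) x
  have hk_nonneg : ∀ t x, 0 ≤ k t x := fun t x =>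
    indicator_nonneg (fun x hx => by have := hx.1; positivity) x
  have hk_integral : ∀ t, 0 ≤ t → ∫ x, k t x = t ^ 2 := fun t ht =>
    integral_indicator_Ioo_two_mul ht
  have hf : Integrable (fun p : ℝ × ℝ => k p.1 p.2 * φ p.1) (μ.prod volume) := by
    refine (integrable_prod_iff ?_).2 ⟨Eventually.of_forall fun t => ?_, ?_⟩
    · exact measurable_indicator_Ioo_two_mul.aestronglyMeasurable.mul
        (hφ.comp_quasiMeasurePreserving Measure.quasiMeasurePreserving_fst)
    · exact (integrable_indicator_Ioo_two_mul t).mul_const (φ t)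
    · refine hint.norm.congr (h₀.mono fun t ht => ?_)
      simp only [norm_mul, Real.norm_of_nonneg (hk_nonneg _ _), integral_mul_const,
        hk_integral t ht, norm_pow, Real.norm_eq_abs, sq_abs]
  have hinner : ∀ x, ∫ t, k t x * φ t ∂μ
      = (Ioi 0).indicator (fun x => 2 * x * ∫ t in Ioi x, φ t ∂μ) x := fun x => by
    by_cases hx : 0 < x
    · have hk : ∀ t, k t x * φ t = (Ioi x).indicator (fun t => 2 * x * φ t) t := fun t => by
        by_cases ht : x < t <;> simp [k, hx, ht, indicator_apply]
      simp only [hk, integral_indicator measurableSet_Ioi, integral_const_mul,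
        indicator_of_mem (show x ∈ Ioi 0 from hx)]
    · simp [k, hx, indicator_apply]
  calc ∫ t, t ^ 2 * φ t ∂μ = ∫ t, (∫ x, k t x) * φ t ∂μ :=
        integral_congr_ae (h₀.mono fun t ht => by simp only [hk_integral t ht])
    _ = ∫ t, (∫ x, k t x * φ t) ∂μ := by simp only [integral_mul_const]
    _ = ∫ x, (∫ t, k t x * φ t ∂μ) := integral_integral_swap hf
    _ = _ := by simp only [hinner, integral_indicator measurableSet_Ioi]

open ProbabilityTheory in
theorem wcre_alt_expression_general (μ : Measure ℝ) [IsProbabilityMeasure μ]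
    (hsupp : μ (Set.Iio 0) = 0) (hcont : ∀ x : ℝ, μ {x} = 0)
    (hfin2 : Integrable
      (fun x : ℝ => x ^ 2 * (1 + Real.log (μ (Set.Ioi x)).toReal)) μ) :
    -∫ x in Set.Ioi (0:ℝ),
        x * (μ (Set.Ioi x)).toReal * Real.log (μ (Set.Ioi x)).toReal
      = -(1/2) * ∫ x, x ^ 2 * (1 + Real.log (μ (Set.Ioi x)).toReal) ∂μ := by
  have : NullSingletonClass μ := ⟨hcont⟩
  have h₀ : ∀ᵐ t ∂μ, 0 ≤ t := by
    simp only [ae_iff, not_le]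
    exact hsupp
  have hfubini := integral_sq_mul_eq_setIntegral_Ioi (φ := fun t => 1 + log (survival μ t)) h₀
    (measurable_survival.log.const_add 1).aestronglyMeasurable hfin2
  change -∫ x in Ioi 0, x * survival μ x * log (survival μ x)
    = -(1 / 2) * ∫ x, x ^ 2 * (1 + log (survival μ x)) ∂μ
  simp only [hfubini, setIntegral_Ioi_one_add_log_survival, mul_assoc, integral_const_mul]
  ring

theorem wcre_alt_expression (μ : Measure ℝ) [IsProbabilityMeasure μ]
    (hsupp : μ (Set.Iio 0) = 0) (hcont : ∀ x : ℝ, μ {x} = 0)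
    (hfin : IntegrableOn
      (fun x : ℝ => x * (μ (Set.Ioi x)).toReal * Real.log (μ (Set.Ioi x)).toReal)
      (Set.Ioi 0))
    (hfin2 : Integrable
      (fun x : ℝ => x ^ 2 * (1 + Real.log (μ (Set.Ioi x)).toReal)) μ) :
    -∫ x in Set.Ioi (0:ℝ),
        x * (μ (Set.Ioi x)).toReal * Real.log (μ (Set.Ioi x)).toReal
      = -(1/2) * ∫ x, x ^ 2 * (1 + Real.log (μ (Set.Ioi x)).toReal) ∂μ :=
  wcre_alt_expression_general μ hsupp hcont hfin2
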